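/- arXiv:1911.10420 — 2 statements merged into one kernel-verified Lean document; each statement's English description precedes it below -/
import Mathlib

section
/- Let (Ω, F, P) be a probability space with a filtration (F_k)_{k≥0}, let n ≥ 1, let θ* ∈ ℝ^n, and let μ, L > 0 be constants with μ² ≤ L². Let (θ_k)_{k≥0} be an (F_k)-adapted sequence of square-integrable ℝ^n-valued random vectors with θ_0 deterministic, and let (ĥ_k)_{k≥0} be square-integrable ℝ^n-valued random vectors such that θ_{k+1} = θ_k − η ĥ_k with step size η = μ/L². Suppose that for every k, almost surely ⟨θ_k − θ*, E[ĥ_k | F_k]⟩ ≥ μ‖θ_k − θ*‖² and E[‖ĥ_k‖² | F_k] ≤ L²‖θ_k − θ*‖². Then for every k ≥ 0, E[‖θ_k − θ*‖²] ≤ (1 − μ²/L²)^k ‖θ_0 − θ*‖², i.e., the iteration converges linearly (Theorem 1, linear convergence of the bi-fidelity stochastic average gradient iteration). -/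
open MeasureTheory ProbabilityTheory RealInnerProductSpace

/-- Conditional expectation commutes with coordinate projections on Euclidean space. -/
lemma condexp_euclidean_proj {Ω : Type*} {m m0' : MeasurableSpace Ω} (hm : m ≤ m0')
    (P : Measure Ω) [SigmaFinite (P.trim hm)] {n : ℕ}
    {f : Ω → EuclideanSpace ℝ (Fin n)} (hf : Integrable f P) (i : Fin n) :
    (fun ω => (P[f|m]) ω i) =ᵐ[P] P[(fun ω => f ω i)|m] := by
  refine ae_eq_condExp_of_forall_setIntegral_eq hm
    ((EuclideanSpace.proj (𝕜 := ℝ) i).integrable_comp hf) ?_ ?_ ?_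
  · intro s _ _
    exact ((EuclideanSpace.proj (𝕜 := ℝ) i).integrable_comp
      (integrable_condExp (f := f))).integrableOn
  · intro s hs hμs
    have h1 : ∫ ω in s, (EuclideanSpace.proj (𝕜 := ℝ) i) ((P[f|m]) ω) ∂P
        = (EuclideanSpace.proj (𝕜 := ℝ) i) (∫ ω in s, (P[f|m]) ω ∂P) :=
      ContinuousLinearMap.integral_comp_comm _ integrable_condExp.integrableOn
    have h2 : ∫ ω in s, (EuclideanSpace.proj (𝕜 := ℝ) i) (f ω) ∂P
        = (EuclideanSpace.proj (𝕜 := ℝ) i) (∫ ω in s, f ω ∂P) :=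
      ContinuousLinearMap.integral_comp_comm _ hf.integrableOn
    calc ∫ ω in s, (P[f|m]) ω i ∂P
        = (EuclideanSpace.proj (𝕜 := ℝ) i) (∫ ω in s, (P[f|m]) ω ∂P) := h1
      _ = (EuclideanSpace.proj (𝕜 := ℝ) i) (∫ ω in s, f ω ∂P) := by
          rw [setIntegral_condExp hm hf hs]
      _ = ∫ ω in s, f ω i ∂P := h2.symm
  · exact StronglyMeasurable.aestronglyMeasurable
      ((EuclideanSpace.proj (𝕜 := ℝ) i).continuous.comp_stronglyMeasurable
        stronglyMeasurable_condExp)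

/-- The inner product of two `L²` functions is integrable. -/
lemma integrable_inner_of_memL2 {Ω : Type*} {m0' : MeasurableSpace Ω} {P : Measure Ω}
    {E : Type*} [NormedAddCommGroup E] [InnerProductSpace ℝ E]
    {f g : Ω → E} (hf : MemLp f 2 P) (hg : MemLp g 2 P) :
    Integrable (fun ω => (⟪f ω, g ω⟫ : ℝ)) P := by
  have h := L2.integrable_inner (𝕜 := ℝ) (hf.toLp f) (hg.toLp g)
  refine h.congr ?_
  filter_upwards [hf.coeFn_toLp, hg.coeFn_toLp] with ω h1 h2
  rw [h1, h2]

/-- The product of two real `L²` functions is integrable. -/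
lemma integrable_mul_of_memL2 {Ω : Type*} {m0' : MeasurableSpace Ω} {P : Measure Ω}
    {f g : Ω → ℝ} (hf : MemLp f 2 P) (hg : MemLp g 2 P) :
    Integrable (fun ω => f ω * g ω) P := by
  have := integrable_inner_of_memL2 (E := ℝ) hf hg
  simpa [RCLike.inner_apply, mul_comm] using this

/-- Theorem 1 (linear convergence of the bi-fidelity stochastic average gradient
iteration): if `θ_{k+1} = θ_k − η ĥ_k` with `η = μ/L²`, where almost surely the
conditional mean of the search direction satisfies
`⟨θ_k − θ*, E[ĥ_k | F_k]⟩ ≥ μ‖θ_k − θ*‖²` and its conditional second moment satisfies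
`E[‖ĥ_k‖² | F_k] ≤ L²‖θ_k − θ*‖²`, then
`E[‖θ_k − θ*‖²] ≤ (1 − μ²/L²)^k ‖θ_0 − θ*‖²` for every `k`. -/
theorem bfsag_linear_convergence
    {Ω : Type*} {m0 : MeasurableSpace Ω} (P : Measure Ω) [IsProbabilityMeasure P]
    {n : ℕ} (hn : 1 ≤ n) (F : Filtration ℕ m0)
    (θstar : EuclideanSpace ℝ (Fin n))
    (μ L : ℝ) (hμ : 0 < μ) (hL : 0 < L) (hμL : μ ^ 2 ≤ L ^ 2)
    (θ h : ℕ → Ω → EuclideanSpace ℝ (Fin n))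
    (hadapted : Adapted F θ)
    (hθL2 : ∀ k, MemLp (θ k) 2 P) (hhL2 : ∀ k, MemLp (h k) 2 P)
    (θ0 : EuclideanSpace ℝ (Fin n)) (hθ0 : θ 0 = fun _ => θ0)
    (η : ℝ) (hη : η = μ / L ^ 2)
    (hupdate : ∀ k ω, θ (k + 1) ω = θ k ω - η • h k ω)
    (hmean : ∀ k, ∀ᵐ ω ∂P,
      μ * ‖θ k ω - θstar‖ ^ 2 ≤ ⟪θ k ω - θstar, (P[h k | F k]) ω⟫)
    (hsecond : ∀ k, ∀ᵐ ω ∂P,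
      (P[(fun ω' => ‖h k ω'‖ ^ 2) | F k]) ω ≤ L ^ 2 * ‖θ k ω - θstar‖ ^ 2) :
    ∀ k : ℕ, ∫ ω, ‖θ k ω - θstar‖ ^ 2 ∂P
      ≤ (1 - μ ^ 2 / L ^ 2) ^ k * ‖θ0 - θstar‖ ^ 2 := by
  have hL2pos : (0 : ℝ) < L ^ 2 := by positivity
  set c : ℝ := 1 - μ ^ 2 / L ^ 2 with hc
  have hc0 : 0 ≤ c := by
    rw [hc, sub_nonneg, div_le_one hL2pos]; exact hμL
  -- X k := θ k - θstar
  set X : ℕ → Ω → EuclideanSpace ℝ (Fin n) := fun k ω => θ k ω - θstar with hX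
  have hXL2 : ∀ k, MemLp (X k) 2 P := fun k => (hθL2 k).sub (memLp_const θstar)
  have hXmeas : ∀ k, StronglyMeasurable[F k] (X k) := fun k =>
    (hadapted k).stronglyMeasurable.sub stronglyMeasurable_const
  have hXint : ∀ k, Integrable (X k) P := fun k =>
    (hXL2 k).integrable (by norm_num)
  have hhint : ∀ k, Integrable (h k) P := fun k =>
    (hhL2 k).integrable (by norm_num)
  -- integrability of the squared norms
  have hnormsq_int : ∀ k, Integrable (fun ω => ‖X k ω‖ ^ 2) P := by
    intro k
    have := integrable_inner_of_memL2 (hXL2 k) (hXL2 k)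
    refine this.congr (Filter.Eventually.of_forall fun ω => ?_)
    simpa using real_inner_self_eq_norm_sq (X k ω)
  have hhsq_int : ∀ k, Integrable (fun ω => ‖h k ω‖ ^ 2) P := by
    intro k
    have := integrable_inner_of_memL2 (hhL2 k) (hhL2 k)
    refine this.congr (Filter.Eventually.of_forall fun ω => ?_)
    simpa using real_inner_self_eq_norm_sq (h k ω)
  have hinner_int : ∀ k, Integrable (fun ω => (⟪X k ω, h k ω⟫ : ℝ)) P := fun k =>
    integrable_inner_of_memL2 (hXL2 k) (hhL2 k)
  -- the key almost-everywhere identity: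
  -- ⟪X k, P[h k|F k]⟫ =ᵐ ∑ i, P[(X k)_i (h k)_i | F k]
  have hkey : ∀ k, (fun ω => (⟪X k ω, (P[h k | F k]) ω⟫ : ℝ)) =ᵐ[P]
      (fun ω => ∑ i : Fin n,
        (P[(fun ω' => X k ω' i * h k ω' i) | F k]) ω) := by
    intro k
    have hXiL2 : ∀ i : Fin n, MemLp (fun ω => X k ω i) 2 P := fun i =>
      (EuclideanSpace.proj (𝕜 := ℝ) i).comp_memLp' (hXL2 k)
    have hhiL2 : ∀ i : Fin n, MemLp (fun ω => h k ω i) 2 P := fun i =>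
      (EuclideanSpace.proj (𝕜 := ℝ) i).comp_memLp' (hhL2 k)
    have hterm : ∀ i : Fin n,
        (fun ω => X k ω i * (P[h k | F k]) ω i) =ᵐ[P]
        (P[(fun ω' => X k ω' i * h k ω' i) | F k]) := by
      intro i
      have h1 : (fun ω => (P[h k | F k]) ω i) =ᵐ[P]
          P[(fun ω => h k ω i)|F k] :=
        condexp_euclidean_proj (F.le k) P (hhint k) i
      have h2 : P[(fun ω' => X k ω' i) * (fun ω' => h k ω' i) | F k] =ᵐ[P]
          (fun ω' => X k ω' i) * P[(fun ω' => h k ω' i)|F k] :=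
        condExp_mul_of_stronglyMeasurable_left
          ((EuclideanSpace.proj (𝕜 := ℝ) i).continuous.comp_stronglyMeasurable
            (hXmeas k))
          (integrable_mul_of_memL2 (hXiL2 i) (hhiL2 i))
          ((hhiL2 i).integrable (by norm_num))
      filter_upwards [h1, h2] with ω hω1 hω2
      have : (fun ω' => X k ω' i * h k ω' i)
          = (fun ω' => X k ω' i) * (fun ω' => h k ω' i) := rfl
      rw [this, hω2]
      simp only [Pi.mul_apply]
      rw [hω1]
    have : ∀ᵐ ω ∂P, ∀ i : Fin n,
        X k ω i * (P[h k | F k]) ω i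
          = (P[(fun ω' => X k ω' i * h k ω' i) | F k]) ω := by
      rw [ae_all_iff]
      intro i
      exact hterm i
    filter_upwards [this] with ω hω
    rw [PiLp.inner_apply]
    simp only [RCLike.inner_apply, conj_trivial]
    exact Finset.sum_congr rfl fun i _ => (mul_comm _ _).trans (hω i)
  -- consequently ⟪X k, P[h k|F k]⟫ is integrable and has the same integral as ⟪X k, h k⟫
  have hinner_cond_int : ∀ k,
      Integrable (fun ω => (⟪X k ω, (P[h k | F k]) ω⟫ : ℝ)) P := by
    intro k
    refine (integrable_finset_sum Finset.univ fun i _ => ?_).congr (hkey k).symm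
    exact integrable_condExp
  have hinner_eq : ∀ k,
      ∫ ω, (⟪X k ω, (P[h k | F k]) ω⟫ : ℝ) ∂P = ∫ ω, (⟪X k ω, h k ω⟫ : ℝ) ∂P := by
    intro k
    rw [integral_congr_ae (hkey k)]
    have hXiL2 : ∀ i : Fin n, MemLp (fun ω => X k ω i) 2 P := fun i =>
      (EuclideanSpace.proj (𝕜 := ℝ) i).comp_memLp' (hXL2 k)
    have hhiL2 : ∀ i : Fin n, MemLp (fun ω => h k ω i) 2 P := fun i =>
      (EuclideanSpace.proj (𝕜 := ℝ) i).comp_memLp' (hhL2 k)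
    rw [integral_finset_sum Finset.univ (fun i _ => integrable_condExp)]
    have : ∀ i : Fin n, ∫ ω, (P[(fun ω' => X k ω' i * h k ω' i) | F k]) ω ∂P
        = ∫ ω, X k ω i * h k ω i ∂P := fun i => integral_condExp (F.le k)
    rw [Finset.sum_congr rfl fun i _ => this i]
    rw [← integral_finset_sum Finset.univ
      (fun i _ => integrable_mul_of_memL2 (hXiL2 i) (hhiL2 i))]
    refine integral_congr_ae (Filter.Eventually.of_forall fun ω => ?_)
    simp [PiLp.inner_apply, RCLike.inner_apply, conj_trivial, mul_comm]
  -- one-step contraction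
  have hstep : ∀ k, ∫ ω, ‖X (k + 1) ω‖ ^ 2 ∂P ≤ c * ∫ ω, ‖X k ω‖ ^ 2 ∂P := by
    intro k
    set A := ∫ ω, ‖X k ω‖ ^ 2 ∂P with hA
    have hAnonneg : 0 ≤ A :=
      integral_nonneg fun ω => by positivity
    -- pointwise expansion
    have hexp : ∀ ω, ‖X (k + 1) ω‖ ^ 2
        = ‖X k ω‖ ^ 2 - 2 * η * ⟪X k ω, h k ω⟫ + η ^ 2 * ‖h k ω‖ ^ 2 := by
      intro ω
      have hXk1 : X (k + 1) ω = X k ω - η • h k ω := by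
        simp only [hX, hupdate k ω]; abel
      rw [hXk1, @norm_sub_sq_real]
      rw [real_inner_smul_right, norm_smul]
      simp [mul_pow]
      ring
    have hint1 : Integrable (fun ω => ‖X k ω‖ ^ 2 - 2 * η * ⟪X k ω, h k ω⟫) P :=
      (hnormsq_int k).sub ((hinner_int k).const_mul _)
    have hIeq : ∫ ω, ‖X (k + 1) ω‖ ^ 2 ∂P
        = A - 2 * η * ∫ ω, (⟪X k ω, h k ω⟫ : ℝ) ∂P
          + η ^ 2 * ∫ ω, ‖h k ω‖ ^ 2 ∂P := by
      calc ∫ ω, ‖X (k + 1) ω‖ ^ 2 ∂P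
          = ∫ ω, (‖X k ω‖ ^ 2 - 2 * η * ⟪X k ω, h k ω⟫
              + η ^ 2 * ‖h k ω‖ ^ 2) ∂P :=
            integral_congr_ae (Filter.Eventually.of_forall fun ω => hexp ω)
        _ = (∫ ω, (‖X k ω‖ ^ 2 - 2 * η * ⟪X k ω, h k ω⟫) ∂P)
              + ∫ ω, η ^ 2 * ‖h k ω‖ ^ 2 ∂P :=
            integral_add hint1 ((hhsq_int k).const_mul _)
        _ = A - 2 * η * ∫ ω, (⟪X k ω, h k ω⟫ : ℝ) ∂P
              + η ^ 2 * ∫ ω, ‖h k ω‖ ^ 2 ∂P := by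
            rw [integral_sub (hnormsq_int k) ((hinner_int k).const_mul _),
              integral_const_mul, integral_const_mul]
    -- lower bound for the inner product term
    have hB : μ * A ≤ ∫ ω, (⟪X k ω, h k ω⟫ : ℝ) ∂P := by
      rw [← hinner_eq k]
      have : μ * A = ∫ ω, μ * ‖X k ω‖ ^ 2 ∂P := by
        rw [integral_const_mul]
      rw [this]
      exact integral_mono_ae ((hnormsq_int k).const_mul _) (hinner_cond_int k)
        (hmean k)
    -- upper bound for the second moment term
    have hC : ∫ ω, ‖h k ω‖ ^ 2 ∂P ≤ L ^ 2 * A := by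
      have h1 : ∫ ω, ‖h k ω‖ ^ 2 ∂P
          = ∫ ω, (P[(fun ω' => ‖h k ω'‖ ^ 2) | F k]) ω ∂P :=
        (integral_condExp (F.le k)).symm
      rw [h1]
      have h2 : L ^ 2 * A = ∫ ω, L ^ 2 * ‖X k ω‖ ^ 2 ∂P := by
        rw [integral_const_mul]
      rw [h2]
      exact integral_mono_ae integrable_condExp ((hnormsq_int k).const_mul _)
        (hsecond k)
    rw [hIeq]
    have hηpos : 0 < η := by rw [hη]; positivity
    have hc_eq : c * A = A - 2 * η * (μ * A) + η ^ 2 * (L ^ 2 * A) := by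
      rw [hc, hη]; field_simp; ring
    calc A - 2 * η * ∫ ω, (⟪X k ω, h k ω⟫ : ℝ) ∂P
          + η ^ 2 * ∫ ω, ‖h k ω‖ ^ 2 ∂P
        ≤ A - 2 * η * (μ * A) + η ^ 2 * (L ^ 2 * A) := by
          have h1 : 2 * η * (μ * A) ≤ 2 * η * ∫ ω, (⟪X k ω, h k ω⟫ : ℝ) ∂P :=
            mul_le_mul_of_nonneg_left hB (by positivity)
          have h2 : η ^ 2 * ∫ ω, ‖h k ω‖ ^ 2 ∂P ≤ η ^ 2 * (L ^ 2 * A) :=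
            mul_le_mul_of_nonneg_left hC (by positivity)
          linarith
      _ = c * A := hc_eq.symm
  -- base case
  have hbase : ∫ ω, ‖X 0 ω‖ ^ 2 ∂P = ‖θ0 - θstar‖ ^ 2 := by
    simp only [hX, hθ0]
    simp
  -- induction
  intro k
  induction k with
  | zero => simp only [pow_zero, one_mul]; exact le_of_eq hbase
  | succ k ih =>
    calc ∫ ω, ‖θ (k + 1) ω - θstar‖ ^ 2 ∂P
        ≤ c * ∫ ω, ‖θ k ω - θstar‖ ^ 2 ∂P := hstep k
      _ ≤ c * (c ^ k * ‖θ0 - θstar‖ ^ 2) := mul_le_mul_of_nonneg_left ih hc0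
      _ = c ^ (k + 1) * ‖θ0 - θstar‖ ^ 2 := by ring
end

section
/- Let (Ω, F, P) be a probability space with a filtration (F_k)_{k≥0}, let n ≥ 1, let θ* ∈ ℝ^n, and let μ_high, L_high > 0 and δ ≥ 1 be constants with μ_high² ≤ 2 L_high² δ. Let (θ_k)_{k≥0} be an (F_k)-adapted sequence of square-integrable ℝ^n-valued random vectors with θ_0 deterministic, and let (ĥ_k)_{k≥0} be square-integrable ℝ^n-valued random vectors such that θ_{k+1} = θ_k − η ĥ_k with step size η = μ_high/(2 L_high² δ). Suppose that for every k, almost surely the conditional mean g_k = E[ĥ_k | F_k] satisfies ⟨θ_k − θ*, g_k⟩ ≥ μ_high‖θ_k − θ*‖² and ‖g_k‖² ≤ L_high²‖θ_k − θ*‖², and the conditional variances of the coordinates satisfy Σ_{q=1}^n Var(ĥ_{k,q} | F_k) ≤ L_high² δ ‖θ_k − θ*‖². Then for any integers j, m ≥ 1, after K = j·m iterations, E[‖θ_K − θ*‖²] ≤ (1 − μ_high²/(2 L_high² δ))^{j m} ‖θ_0 − θ*‖², i.e., the iteration converges linearly (Theorem 2, linear convergence of the bi-fidelity stochastic variance reduced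 gradient iteration). -/
open MeasureTheory ProbabilityTheory RealInnerProductSpace

section Helpers

variable {Ω : Type*} {m0 : MeasurableSpace Ω} {P : Measure Ω} {n : ℕ}

lemma bfsvrg_integrable_mul {f g : Ω → ℝ} (hf : MemLp f 2 P) (hg : MemLp g 2 P) :
    Integrable (fun ω => f ω * g ω) P := by
  have h : MemLp (f • g) 1 P := by
    exact MemLp.smul hg hf
  rw [← memLp_one_iff_integrable]
  exact h

lemma bfsvrg_norm_sq_eq (x : EuclideanSpace ℝ (Fin n)) : ‖x‖ ^ 2 = ∑ q, x q ^ 2 := by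
  rw [← real_inner_self_eq_norm_sq, PiLp.inner_apply]
  simp [sq, RCLike.inner_apply]

lemma bfsvrg_inner_eq_sum (x y : EuclideanSpace ℝ (Fin n)) : ⟪x, y⟫ = ∑ q, x q * y q := by
  rw [PiLp.inner_apply]
  simp [RCLike.inner_apply, mul_comm]

lemma bfsvrg_memℒp_coord {f : Ω → EuclideanSpace ℝ (Fin n)} (hf : MemLp f 2 P) (q : Fin n) :
    MemLp (fun ω => f ω q) 2 P := by
  simpa [Function.comp_def, PiLp.proj_apply] using
    (EuclideanSpace.proj (𝕜 := ℝ) q).comp_memLp' hf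

lemma bfsvrg_sm_coord {Ω' : Type*} {m : MeasurableSpace Ω'} {f : Ω' → EuclideanSpace ℝ (Fin n)}
    (hf : StronglyMeasurable f) (q : Fin n) : StronglyMeasurable (fun ω => f ω q) := by
  simpa [PiLp.proj_apply] using
    (EuclideanSpace.proj (𝕜 := ℝ) q).continuous.comp_stronglyMeasurable hf

lemma bfsvrg_condexp_coord [IsFiniteMeasure P] (F : Filtration ℕ m0) (k : ℕ)
    {f : Ω → EuclideanSpace ℝ (Fin n)} (hf : Integrable f P) (q : Fin n) :
    (fun ω => (P[f|F k]) ω q) =ᵐ[P] P[fun ω => f ω q|F k] := by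
  refine ae_eq_condExp_of_forall_setIntegral_eq (F.le k)
    ((EuclideanSpace.proj (𝕜 := ℝ) q).integrable_comp hf)
    (fun s _ _ => ((EuclideanSpace.proj (𝕜 := ℝ) q).integrable_comp
      integrable_condExp).integrableOn)
    (fun s hs hμs => ?_) ?_
  · have h1 : ∀ (g : Ω → EuclideanSpace ℝ (Fin n)), IntegrableOn g s P →
        ∫ ω in s, g ω q ∂P = (EuclideanSpace.proj (𝕜 := ℝ) q) (∫ ω in s, g ω ∂P) := by
      intro g hg
      rw [← (EuclideanSpace.proj (𝕜 := ℝ) q).integral_comp_comm hg]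
      simp [PiLp.proj_apply]
    rw [h1 _ integrable_condExp.integrableOn, h1 _ hf.integrableOn,
      setIntegral_condExp (F.le k) hf hs]
  · exact ((EuclideanSpace.proj (𝕜 := ℝ) q).continuous.comp_stronglyMeasurable
      stronglyMeasurable_condExp).aestronglyMeasurable

lemma bfsvrg_integral_mul_condexp [IsFiniteMeasure P] (F : Filtration ℕ m0) (k : ℕ)
    {a b : Ω → ℝ} (ha : StronglyMeasurable[F k] a) (ha2 : MemLp a 2 P) (hb2 : MemLp b 2 P) :
    ∫ ω, a ω * b ω ∂P = ∫ ω, a ω * (P[b|F k]) ω ∂P := by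
  have hab : Integrable (fun ω => a ω * b ω) P := bfsvrg_integrable_mul ha2 hb2
  have hb1 : Integrable b P := hb2.integrable one_le_two
  rw [← integral_condExp (F.le k) (f := fun ω => a ω * b ω)]
  exact integral_congr_ae (condExp_mul_of_stronglyMeasurable_left ha hab hb1)

end Helpers

set_option maxHeartbeats 1000000 in
/-- Theorem 2 (linear convergence of the bi-fidelity stochastic variance reduced
gradient iteration): if `θ_{k+1} = θ_k − η ĥ_k` with `η = μ_high/(2 L_high² δ)`,
where almost surely the conditional mean `g_k = E[ĥ_k | F_k]` satisfies
`⟨θ_k − θ*, g_k⟩ ≥ μ_high‖θ_k − θ*‖²` and `‖g_k‖² ≤ L_high²‖θ_k − θ*‖²`, and the summed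
coordinatewise conditional variances satisfy
`Σ_q Var(ĥ_{k,q} | F_k) ≤ L_high² δ ‖θ_k − θ*‖²`, then after `K = j·m` iterations
`E[‖θ_K − θ*‖²] ≤ (1 − μ_high²/(2 L_high² δ))^{j m} ‖θ_0 − θ*‖²`. -/
theorem bfsvrg_linear_convergence
    {Ω : Type*} {m0 : MeasurableSpace Ω} (P : Measure Ω) [IsProbabilityMeasure P]
    {n : ℕ} (hn : 1 ≤ n) (F : Filtration ℕ m0)
    (θstar : EuclideanSpace ℝ (Fin n))
    (μhigh Lhigh δ : ℝ) (hμ : 0 < μhigh) (hL : 0 < Lhigh) (hδ : 1 ≤ δ)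
    (hμL : μhigh ^ 2 ≤ 2 * Lhigh ^ 2 * δ)
    (θ h : ℕ → Ω → EuclideanSpace ℝ (Fin n))
    (hadapted : StronglyAdapted F θ)
    (hθL2 : ∀ k, MemLp (θ k) 2 P) (hhL2 : ∀ k, MemLp (h k) 2 P)
    (θ0 : EuclideanSpace ℝ (Fin n)) (hθ0 : θ 0 = fun _ => θ0)
    (η : ℝ) (hη : η = μhigh / (2 * Lhigh ^ 2 * δ))
    (hupdate : ∀ k ω, θ (k + 1) ω = θ k ω - η • h k ω)
    (hmean : ∀ k, ∀ᵐ ω ∂P,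
      μhigh * ‖θ k ω - θstar‖ ^ 2 ≤ ⟪θ k ω - θstar, (P[h k | F k]) ω⟫)
    (hgnorm : ∀ k, ∀ᵐ ω ∂P,
      ‖(P[h k | F k]) ω‖ ^ 2 ≤ Lhigh ^ 2 * ‖θ k ω - θstar‖ ^ 2)
    (hcondvar : ∀ k, ∀ᵐ ω ∂P,
      ∑ q : Fin n,
        (P[(fun ω' => (h k ω' q - (P[h k | F k]) ω' q) ^ 2) | F k]) ω
        ≤ Lhigh ^ 2 * δ * ‖θ k ω - θstar‖ ^ 2) :
    ∀ j m : ℕ, 1 ≤ j → 1 ≤ m →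
      ∫ ω, ‖θ (j * m) ω - θstar‖ ^ 2 ∂P
        ≤ (1 - μhigh ^ 2 / (2 * Lhigh ^ 2 * δ)) ^ (j * m) * ‖θ0 - θstar‖ ^ 2 := by
  have hδ0 : (0:ℝ) < δ := lt_of_lt_of_le one_pos hδ
  have hLδ : (0:ℝ) < 2 * Lhigh ^ 2 * δ := by positivity
  have hηpos : 0 < η := by rw [hη]; positivity
  set ρ : ℝ := μhigh ^ 2 / (2 * Lhigh ^ 2 * δ) with hρ
  have hρ0 : 0 ≤ ρ := by positivity
  have hρ1 : ρ ≤ 1 := (div_le_one hLδ).mpr hμL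
  have key : ∀ k, ∫ ω, ‖θ (k+1) ω - θstar‖ ^ 2 ∂P
      ≤ (1 - ρ) * ∫ ω, ‖θ k ω - θstar‖ ^ 2 ∂P := by
    intro k
    set X : Ω → EuclideanSpace ℝ (Fin n) := fun ω => θ k ω - θstar with hXdef
    set g : Ω → EuclideanSpace ℝ (Fin n) := P[h k|F k] with hgdef
    have hX2 : MemLp X 2 P := (hθL2 k).sub (memLp_const θstar)
    have hXn2 : Integrable (fun ω => ‖X ω‖ ^ 2) P := hX2.norm.integrable_sq
    have hIX0 : 0 ≤ ∫ ω, ‖X ω‖ ^ 2 ∂P := integral_nonneg fun ω => by positivity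
    have hXmeas : StronglyMeasurable[F k] X := (hadapted k).sub stronglyMeasurable_const
    have hh2 := hhL2 k
    have hhInt : Integrable (h k) P := hh2.integrable one_le_two
    have hhn2 : Integrable (fun ω => ‖h k ω‖ ^ 2) P := hh2.norm.integrable_sq
    have hgmeas : StronglyMeasurable[F k] g := stronglyMeasurable_condExp
    have hgaes : AEStronglyMeasurable g P := (hgmeas.mono (F.le k)).aestronglyMeasurable
    have hgbound : ∀ᵐ ω ∂P, ‖g ω‖ ≤ Lhigh * ‖X ω‖ := by
      filter_upwards [hgnorm k] with ω hω
      nlinarith [norm_nonneg (g ω), norm_nonneg (X ω), hL.le,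
        mul_nonneg hL.le (norm_nonneg (X ω))]
    have hg2 : MemLp g 2 P := by
      refine MemLp.of_le_mul (c := Lhigh) hX2.norm hgaes ?_
      filter_upwards [hgbound] with ω hω
      simpa [norm_norm] using hω
    have hgn2 : Integrable (fun ω => ‖g ω‖ ^ 2) P := hg2.norm.integrable_sq
    -- coordinate facts
    have hXq2 : ∀ q, MemLp (fun ω => X ω q) 2 P := fun q => bfsvrg_memℒp_coord hX2 q
    have hhq2 : ∀ q, MemLp (fun ω => h k ω q) 2 P := fun q => bfsvrg_memℒp_coord hh2 q
    have hgq2 : ∀ q, MemLp (fun ω => g ω q) 2 P := fun q => bfsvrg_memℒp_coord hg2 q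
    have hXqm : ∀ q, StronglyMeasurable[F k] (fun ω => X ω q) :=
      fun q => bfsvrg_sm_coord hXmeas q
    have hgqm : ∀ q, StronglyMeasurable[F k] (fun ω => g ω q) :=
      fun q => bfsvrg_sm_coord hgmeas q
    have hcoord : ∀ q : Fin n, (fun ω => g ω q) =ᵐ[P] P[fun ω => h k ω q|F k] :=
      fun q => bfsvrg_condexp_coord F k hhInt q
    -- (A) inner product
    have hinner_int : Integrable (fun ω => ⟪X ω, h k ω⟫) P := by
      simp_rw [bfsvrg_inner_eq_sum]
      exact integrable_finset_sum _ fun q _ => bfsvrg_integrable_mul (hXq2 q) (hhq2 q)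
    have hinnerg_int : Integrable (fun ω => ⟪X ω, g ω⟫) P := by
      simp_rw [bfsvrg_inner_eq_sum]
      exact integrable_finset_sum _ fun q _ => bfsvrg_integrable_mul (hXq2 q) (hgq2 q)
    have hA : ∫ ω, ⟪X ω, h k ω⟫ ∂P = ∫ ω, ⟪X ω, g ω⟫ ∂P := by
      have h1 : ∀ q : Fin n, ∫ ω, X ω q * h k ω q ∂P = ∫ ω, X ω q * g ω q ∂P := by
        intro q
        rw [bfsvrg_integral_mul_condexp F k (hXqm q) (hXq2 q) (hhq2 q)]
        refine integral_congr_ae ?_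
        filter_upwards [hcoord q] with ω hω
        rw [hω]
      calc ∫ ω, ⟪X ω, h k ω⟫ ∂P = ∫ ω, ∑ q, X ω q * h k ω q ∂P := by
            simp_rw [bfsvrg_inner_eq_sum]
        _ = ∑ q, ∫ ω, X ω q * h k ω q ∂P :=
            integral_finset_sum _ fun q _ => bfsvrg_integrable_mul (hXq2 q) (hhq2 q)
        _ = ∑ q, ∫ ω, X ω q * g ω q ∂P := Finset.sum_congr rfl fun q _ => h1 q
        _ = ∫ ω, ∑ q, X ω q * g ω q ∂P :=
            (integral_finset_sum _ fun q _ => bfsvrg_integrable_mul (hXq2 q) (hgq2 q)).symm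
        _ = ∫ ω, ⟪X ω, g ω⟫ ∂P := by simp_rw [bfsvrg_inner_eq_sum]
    have h2 : μhigh * ∫ ω, ‖X ω‖ ^ 2 ∂P ≤ ∫ ω, ⟪X ω, g ω⟫ ∂P := by
      rw [← integral_const_mul]
      exact integral_mono_ae (hXn2.const_mul _) hinnerg_int (hmean k)
    -- (B) second moment
    have hB : ∫ ω, ‖h k ω‖ ^ 2 ∂P ≤ 2 * Lhigh ^ 2 * δ * ∫ ω, ‖X ω‖ ^ 2 ∂P := by
      have hd2 : ∀ q, MemLp (fun ω => h k ω q - g ω q) 2 P :=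
        fun q => (hhq2 q).sub (hgq2 q)
      have hsq_int : ∀ q, Integrable (fun ω => (h k ω q - g ω q) ^ 2) P :=
        fun q => (hd2 q).integrable_sq
      have e2 : ∀ q : Fin n, ∫ ω, g ω q * h k ω q ∂P = ∫ ω, g ω q * g ω q ∂P := by
        intro q
        rw [bfsvrg_integral_mul_condexp F k (hgqm q) (hgq2 q) (hhq2 q)]
        refine integral_congr_ae ?_
        filter_upwards [hcoord q] with ω hω
        rw [hω]
      have e3 : ∀ q : Fin n, ∫ ω, (h k ω q) ^ 2 ∂P
          = ∫ ω, (h k ω q - g ω q) ^ 2 ∂P + ∫ ω, g ω q * g ω q ∂P := by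
        intro q
        have hptw : (fun ω => (h k ω q) ^ 2)
            = fun ω => ((h k ω q - g ω q) ^ 2 + (2 * (g ω q * h k ω q) - g ω q * g ω q)) := by
          funext ω; ring
        have hsub : Integrable (fun ω => 2 * (g ω q * h k ω q) - g ω q * g ω q) P :=
          ((bfsvrg_integrable_mul (hgq2 q) (hhq2 q)).const_mul 2).sub
            (bfsvrg_integrable_mul (hgq2 q) (hgq2 q))
        have hmul2 : Integrable (fun ω => 2 * (g ω q * h k ω q)) P :=
          (bfsvrg_integrable_mul (hgq2 q) (hhq2 q)).const_mul 2
        rw [hptw, integral_add (hsq_int q) hsub,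
          integral_sub hmul2 (bfsvrg_integrable_mul (hgq2 q) (hgq2 q)),
          integral_const_mul, e2 q]
        ring
      have hvar : ∑ q : Fin n, ∫ ω, (h k ω q - g ω q) ^ 2 ∂P
          ≤ Lhigh ^ 2 * δ * ∫ ω, ‖X ω‖ ^ 2 ∂P := by
        have e4 : ∀ q : Fin n, ∫ ω, (h k ω q - g ω q) ^ 2 ∂P
            = ∫ ω, (P[(fun ω' => (h k ω' q - (P[h k|F k]) ω' q) ^ 2)|F k]) ω ∂P :=
          fun q => (integral_condExp (F.le k)).symm
        calc ∑ q : Fin n, ∫ ω, (h k ω q - g ω q) ^ 2 ∂P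
            = ∑ q : Fin n, ∫ ω, (P[(fun ω' => (h k ω' q - (P[h k|F k]) ω' q) ^ 2)|F k]) ω ∂P :=
              Finset.sum_congr rfl fun q _ => e4 q
          _ = ∫ ω, ∑ q : Fin n, (P[(fun ω' => (h k ω' q - (P[h k|F k]) ω' q) ^ 2)|F k]) ω ∂P :=
              (integral_finset_sum _ fun q _ => integrable_condExp).symm
          _ ≤ ∫ ω, Lhigh ^ 2 * δ * ‖X ω‖ ^ 2 ∂P :=
              integral_mono_ae (integrable_finset_sum _ fun q _ => integrable_condExp)
                (hXn2.const_mul _) (hcondvar k)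
          _ = Lhigh ^ 2 * δ * ∫ ω, ‖X ω‖ ^ 2 ∂P := integral_const_mul _ _
      have hng : ∑ q : Fin n, ∫ ω, g ω q * g ω q ∂P ≤ Lhigh ^ 2 * ∫ ω, ‖X ω‖ ^ 2 ∂P := by
        have : ∑ q : Fin n, ∫ ω, g ω q * g ω q ∂P = ∫ ω, ‖g ω‖ ^ 2 ∂P := by
          rw [← integral_finset_sum _ fun q _ => bfsvrg_integrable_mul (hgq2 q) (hgq2 q)]
          refine integral_congr_ae (Filter.Eventually.of_forall fun ω => ?_)
          show (∑ q, g ω q * g ω q) = ‖g ω‖ ^ 2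
          rw [bfsvrg_norm_sq_eq]
          exact Finset.sum_congr rfl fun q _ => (pow_two (g ω q)).symm
        rw [this, ← integral_const_mul]
        exact integral_mono_ae hgn2 (hXn2.const_mul _) (hgnorm k)
      have hsum : ∫ ω, ‖h k ω‖ ^ 2 ∂P = ∑ q : Fin n, ∫ ω, (h k ω q) ^ 2 ∂P := by
        calc ∫ ω, ‖h k ω‖ ^ 2 ∂P = ∫ ω, ∑ q, (h k ω q) ^ 2 ∂P := by
              simp_rw [bfsvrg_norm_sq_eq]
          _ = ∑ q : Fin n, ∫ ω, (h k ω q) ^ 2 ∂P :=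
              integral_finset_sum _ fun q _ => (hhq2 q).integrable_sq
      rw [hsum]
      have : ∑ q : Fin n, ∫ ω, (h k ω q) ^ 2 ∂P
          = (∑ q : Fin n, ∫ ω, (h k ω q - g ω q) ^ 2 ∂P)
            + ∑ q : Fin n, ∫ ω, g ω q * g ω q ∂P := by
        rw [← Finset.sum_add_distrib]
        exact Finset.sum_congr rfl fun q _ => e3 q
      rw [this]
      nlinarith [hIX0, sq_nonneg Lhigh,
        mul_nonneg (mul_nonneg (sq_nonneg Lhigh) (sub_nonneg.mpr hδ)) hIX0]
    -- (C) combine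
    have expand : ∀ ω, ‖θ (k+1) ω - θstar‖ ^ 2
        = ‖X ω‖ ^ 2 - 2 * η * ⟪X ω, h k ω⟫ + η ^ 2 * ‖h k ω‖ ^ 2 := by
      intro ω
      have hstep : θ (k+1) ω - θstar = X ω - η • h k ω := by
        rw [hupdate k ω, hXdef, sub_right_comm]
      rw [hstep, norm_sub_sq_real, real_inner_smul_right, norm_smul]
      simp only [Real.norm_eq_abs, mul_pow, sq_abs]
      ring
    have hsplit : ∫ ω, ‖θ (k+1) ω - θstar‖ ^ 2 ∂P
        = (∫ ω, ‖X ω‖ ^ 2 ∂P) - 2 * η * (∫ ω, ⟪X ω, h k ω⟫ ∂P)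
          + η ^ 2 * ∫ ω, ‖h k ω‖ ^ 2 ∂P := by
      simp_rw [expand]
      have hmulη : Integrable (fun ω => 2 * η * ⟪X ω, h k ω⟫) P := hinner_int.const_mul _
      have hsub2 : Integrable (fun ω => ‖X ω‖ ^ 2 - 2 * η * ⟪X ω, h k ω⟫) P := hXn2.sub hmulη
      have hmulη2 : Integrable (fun ω => η ^ 2 * ‖h k ω‖ ^ 2) P := hhn2.const_mul _
      rw [integral_add hsub2 hmulη2, integral_sub hXn2 hmulη, integral_const_mul,
        integral_const_mul]
    have hco : 1 - 2 * η * μhigh + η ^ 2 * (2 * Lhigh ^ 2 * δ) = 1 - ρ := by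
      have h2L : (2 * Lhigh ^ 2 * δ) ≠ 0 := ne_of_gt hLδ
      rw [hη, hρ]
      field_simp
      ring
    have hfin : (∫ ω, ‖X ω‖ ^ 2 ∂P) - 2 * η * (∫ ω, ⟪X ω, g ω⟫ ∂P)
        + η ^ 2 * ∫ ω, ‖h k ω‖ ^ 2 ∂P ≤ (1 - ρ) * ∫ ω, ‖X ω‖ ^ 2 ∂P := by
      set I := ∫ ω, ‖X ω‖ ^ 2 ∂P with hI
      set A := ∫ ω, ⟪X ω, g ω⟫ ∂P with hAdef
      set C := ∫ ω, ‖h k ω‖ ^ 2 ∂P with hC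
      rw [← hco]
      nlinarith [mul_nonneg hηpos.le (sub_nonneg.mpr h2),
        mul_nonneg (sq_nonneg η) (sub_nonneg.mpr hB), hIX0]
    rw [hsplit, hA]
    exact hfin
  have main : ∀ K : ℕ, ∫ ω, ‖θ K ω - θstar‖ ^ 2 ∂P ≤ (1 - ρ) ^ K * ‖θ0 - θstar‖ ^ 2 := by
    intro K
    induction K with
    | zero => simp [hθ0]
    | succ k ih =>
      calc ∫ ω, ‖θ (k+1) ω - θstar‖ ^ 2 ∂P
          ≤ (1 - ρ) * ∫ ω, ‖θ k ω - θstar‖ ^ 2 ∂P := key k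
        _ ≤ (1 - ρ) * ((1 - ρ) ^ k * ‖θ0 - θstar‖ ^ 2) :=
            mul_le_mul_of_nonneg_left ih (by linarith)
        _ = (1 - ρ) ^ (k+1) * ‖θ0 - θstar‖ ^ 2 := by ring
  intro j m _ _
  exact main (j * m)
end
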